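/- arXiv:1408.3718 — 6 statements merged into one kernel-verified Lean document; each statement's English description precedes it below -/
import Mathlib

section
/- Let (K, v) be an Abelian unital po-group, E = Γ(K, v), and let I be an ideal of E. Then the effect subalgebra of E generated by I equals I ∪ I⁻, where I⁻ = {v − x : x ∈ I}. Precisely: the set I ∪ I⁻ contains v, is closed under the complement x ↦ v − x, is closed under sums x + y with x + y ≤ v, contains I, and is contained in every effect subalgebra of E containing I. -/
open Set

/-! Common vocabulary: interval effect algebras `Γ(K, v) = Set.Icc 0 v` in Abelian
po-groups (`OrderedAddCommGroup`), ideals, decompositions, states, etc., following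
Dvurečenskij, "Lexicographic effect algebras". -/

section Defs

variable {K : Type*} [AddCommGroup K] [PartialOrder K] [IsOrderedAddMonoid K]
variable {H : Type*} [AddCommGroup H] [PartialOrder H] [IsOrderedAddMonoid H]
variable {L : Type*} [AddCommGroup L] [PartialOrder L] [IsOrderedAddMonoid L]

/-- `v` is a strong unit of the po-group `K`. -/
def IsStrongUnit (v : K) : Prop := 0 ≤ v ∧ ∀ g : K, ∃ n : ℕ, g ≤ n • v

/-- The Riesz decomposition property for a po-group. -/
def RDP (K : Type*) [AddCommGroup K] [PartialOrder K] [IsOrderedAddMonoid K] : Prop :=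
  ∀ a₁ a₂ b₁ b₂ : K, 0 ≤ a₁ → 0 ≤ a₂ → 0 ≤ b₁ → 0 ≤ b₂ → a₁ + a₂ = b₁ + b₂ →
    ∃ c₁₁ c₁₂ c₂₁ c₂₂ : K, 0 ≤ c₁₁ ∧ 0 ≤ c₁₂ ∧ 0 ≤ c₂₁ ∧ 0 ≤ c₂₂ ∧
      a₁ = c₁₁ + c₁₂ ∧ a₂ = c₂₁ + c₂₂ ∧ b₁ = c₁₁ + c₂₁ ∧ b₂ = c₁₂ + c₂₂

/-- A poset is an antilattice if any two elements possessing a supremum or an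
infimum are comparable. -/
def IsAntilattice (α : Type*) [PartialOrder α] : Prop :=
  ∀ a b : α, ((∃ c, IsLUB {a, b} c) ∨ (∃ c, IsGLB {a, b} c)) → a ≤ b ∨ b ≤ a

/-- A po-group is directed if any two elements have a common upper bound. -/
def IsDirectedGroup (G : Type*) [AddCommGroup G] [PartialOrder G] [IsOrderedAddMonoid G] : Prop :=
  ∀ a b : G, ∃ c : G, a ≤ c ∧ b ≤ c

/-- An ideal of the interval effect algebra `Γ(K, v)`. -/
def IsIdeal (v : K) (I : Set K) : Prop :=
  I.Nonempty ∧ I ⊆ Icc 0 v ∧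
  (∀ x ∈ Icc (0 : K) v, ∀ y ∈ I, x ≤ y → x ∈ I) ∧
  (∀ x ∈ I, ∀ y ∈ I, x + y ≤ v → x + y ∈ I)

/-- An effect subalgebra of `Γ(K, v)`. -/
def IsEffectSubalgebra (v : K) (F : Set K) : Prop :=
  F ⊆ Icc 0 v ∧ v ∈ F ∧ (∀ x ∈ F, v - x ∈ F) ∧
  ∀ x ∈ F, ∀ y ∈ F, x + y ≤ v → x + y ∈ F

/-- The relation `x ∼_I y`. -/
def SimI (I : Set K) (x y : K) : Prop :=
  ∃ e ∈ I, ∃ f ∈ I, e ≤ x ∧ f ≤ y ∧ x - e = y - f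

/-- `x/I ≤ y/I` in the quotient. -/
def QuotLE (v : K) (I : Set K) (x y : K) : Prop :=
  ∃ x₁ ∈ Icc (0 : K) v, SimI I x₁ x ∧ x₁ ≤ y

/-- `x/I < y/I` in the quotient. -/
def QuotLT (v : K) (I : Set K) (x y : K) : Prop :=
  QuotLE v I x y ∧ ¬ SimI I x y

/-- A strict ideal. -/
def IsStrictIdeal (v : K) (I : Set K) : Prop :=
  IsIdeal v I ∧ ∀ x ∈ Icc (0 : K) v, ∀ y ∈ Icc (0 : K) v, QuotLT v I x y → x < y

/-- The ideal `I₀(a)` of `Γ(K, v)` generated by `a`: all finite sums of elements below `a`. -/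
def IdealGen (v a : K) : Set K :=
  {x | x ∈ Icc 0 v ∧ ∃ l : List K, l ≠ [] ∧ (∀ b ∈ l, b ∈ Icc 0 v ∧ b ≤ a) ∧ l.sum = x}

/-- A prime ideal. -/
def IsPrimeIdeal (v : K) (I : Set K) : Prop :=
  IsIdeal v I ∧
  ∀ x ∈ Icc (0 : K) v, ∀ y ∈ Icc (0 : K) v, IdealGen v x ∩ IdealGen v y ⊆ I → x ∈ I ∨ y ∈ I

/-- A retractive ideal: the canonical projection onto the quotient has a right inverse,
encoded by a map `r : E → E` constant on `∼_I`-classes. -/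
def IsRetractiveIdeal (v : K) (I : Set K) : Prop :=
  IsIdeal v I ∧ ∃ r : K → K,
    (∀ x ∈ Icc (0 : K) v, r x ∈ Icc (0 : K) v) ∧ r v = v ∧
    (∀ x ∈ Icc (0 : K) v, ∀ y ∈ Icc (0 : K) v, x + y ≤ v → r (x + y) = r x + r y) ∧
    (∀ x ∈ Icc (0 : K) v, SimI I (r x) x) ∧
    (∀ x ∈ Icc (0 : K) v, ∀ y ∈ Icc (0 : K) v, SimI I x y → r x = r y)

/-- A lexicographic ideal: a nontrivial ideal that is strict, retractive and prime. -/
def IsLexIdeal (v : K) (I : Set K) : Prop :=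
  IsIdeal v I ∧ I ≠ {0} ∧ I ≠ Icc 0 v ∧
    IsStrictIdeal v I ∧ IsRetractiveIdeal v I ∧ IsPrimeIdeal v I

/-- The set of infinitesimal elements of `Γ(K, v)`. -/
def Infin (v : K) : Set K := {x | x ∈ Icc 0 v ∧ ∀ n : ℕ, n • x ≤ v}

/-- A maximal ideal. -/
def IsMaximalIdeal (v : K) (I : Set K) : Prop :=
  IsIdeal v I ∧ I ≠ Icc 0 v ∧ ∀ J : Set K, IsIdeal v J → I ⊂ J → J = Icc 0 v

/-- A local effect algebra: exactly one maximal ideal. -/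
def IsLocal (v : K) : Prop := ∃! I : Set K, IsMaximalIdeal v I

/-- The radical: the intersection of all maximal ideals. -/
def Rad (v : K) : Set K := ⋂₀ {I : Set K | IsMaximalIdeal v I}

/-- A Riesz ideal. -/
def IsRieszIdeal (v : K) (I : Set K) : Prop :=
  IsIdeal v I ∧ ∀ i ∈ I, ∀ a ∈ Icc (0 : K) v, ∀ b ∈ Icc (0 : K) v, a + b ≤ v → i ≤ a + b →
    ∃ ia ∈ I, ∃ ib ∈ I, ia ≤ a ∧ ib ≤ b ∧ ia + ib ≤ v ∧ i ≤ ia + ib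

/-- A (real-valued) state on `Γ(K, v)`. -/
def IsState (v : K) (s : K → ℝ) : Prop :=
  (∀ x ∈ Icc (0 : K) v, s x ∈ Icc (0 : ℝ) 1) ∧ s v = 1 ∧
  ∀ x ∈ Icc (0 : K) v, ∀ y ∈ Icc (0 : K) v, x + y ≤ v → s (x + y) = s x + s y

/-- `Γ(K, v)` has exactly one state (uniqueness meaning: any two states agree on `Γ(K, v)`). -/
def HasUniqueState (v : K) : Prop :=
  (∃ s : K → ℝ, IsState v s) ∧
  ∀ s s' : K → ℝ, IsState v s → IsState v s' → ∀ x ∈ Icc (0 : K) v, s x = s' x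

/-- An `(H, u)`-decomposition of `Γ(K, v)`. -/
def IsDecomp (v : K) (u : H) (E : H → Set K) : Prop :=
  (∀ t ∈ Icc (0 : H) u, (E t).Nonempty) ∧
  (∀ s ∈ Icc (0 : H) u, ∀ t ∈ Icc (0 : H) u, s ≠ t → E s ∩ E t = ∅) ∧
  (⋃ t ∈ Icc (0 : H) u, E t) = Icc 0 v ∧
  (∀ t ∈ Icc (0 : H) u, (fun x => v - x) '' E t = E (u - t)) ∧
  (∀ s ∈ Icc (0 : H) u, ∀ t ∈ Icc (0 : H) u, ∀ x ∈ E s, ∀ y ∈ E t, x + y ≤ v →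
    s + t ≤ u ∧ x + y ∈ E (s + t))

/-- An ordered `(H, u)`-decomposition. -/
def IsOrderedDecomp (v : K) (u : H) (E : H → Set K) : Prop :=
  IsDecomp v u E ∧
  ∀ s ∈ Icc (0 : H) u, ∀ t ∈ Icc (0 : H) u, s < t → ∀ x ∈ E s, ∀ y ∈ E t, x < y

/-- A directed `(H, u)`-decomposition. -/
def IsDirectedDecomp (v : K) (u : H) (E : H → Set K) : Prop :=
  IsDecomp v u E ∧
  ∀ t ∈ Icc (0 : H) u,
    (∀ x ∈ E t, ∀ y ∈ E t, ∃ z ∈ E t, x ≤ z ∧ y ≤ z) ∧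
    (∀ x ∈ E t, ∀ y ∈ E t, ∃ z ∈ E t, z ≤ x ∧ z ≤ y)

/-- A strong `(H, u)`-decomposition, with witnessing elements `c t ∈ E t`. -/
def IsStrongDecomp (v : K) (u : H) (E : H → Set K) (c : H → K) : Prop :=
  IsOrderedDecomp v u E ∧ IsDirectedDecomp v u E ∧
  (∀ t ∈ Icc (0 : H) u, c t ∈ E t) ∧
  (∀ s ∈ Icc (0 : H) u, ∀ t ∈ Icc (0 : H) u, s + t ≤ u → c (s + t) = c s + c t) ∧
  c u = v

/-- A strong `(H, u)`-perfect effect algebra. -/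
def IsStrongPerfect (v : K) (u : H) : Prop :=
  ∃ (E : H → Set K) (c : H → K), IsStrongDecomp v u E c

/-- A homomorphism of interval effect algebras `Γ(K, v) → Γ(L, w)`. -/
def IsEffectHom (v : K) (w : L) (f : K → L) : Prop :=
  (∀ x ∈ Icc (0 : K) v, f x ∈ Icc (0 : L) w) ∧ f v = w ∧
  ∀ x ∈ Icc (0 : K) v, ∀ y ∈ Icc (0 : K) v, x + y ≤ v →
    f x + f y ≤ w ∧ f (x + y) = f x + f y

/-- An isomorphism of interval effect algebras `Γ(K, v) ≅ Γ(L, w)`. -/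
def IsEffectIso (v : K) (w : L) (f : K → L) : Prop :=
  IsEffectHom v w f ∧ ∃ g : L → K, IsEffectHom w v g ∧
    (∀ x ∈ Icc (0 : K) v, g (f x) = x) ∧ (∀ y ∈ Icc (0 : L) w, f (g y) = y)

/-- An o-ideal of a po-group: a directed convex subgroup. -/
def IsOIdeal (H : Type*) [AddCommGroup H] [PartialOrder H] [IsOrderedAddMonoid H] (S : AddSubgroup H) : Prop :=
  (∀ a ∈ S, ∀ b ∈ S, ∃ c ∈ S, a ≤ c ∧ b ≤ c) ∧
  (∀ a ∈ S, ∀ b ∈ S, ∀ x : H, a ≤ x → x ≤ b → x ∈ S)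

/-- A simple po-group: the only o-ideals are `⊥` and `⊤`. -/
def IsSimplePoGroup (H : Type*) [AddCommGroup H] [PartialOrder H] [IsOrderedAddMonoid H] : Prop :=
  ∀ S : AddSubgroup H, IsOIdeal H S → S = ⊥ ∨ S = ⊤

/-- `Γ(H, u)` is Archimedean: its only infinitesimal element is `0`. -/
def GammaArchimedean (u : H) : Prop :=
  ∀ t ∈ Icc (0 : H) u, (∀ n : ℕ, n • t ≤ u) → t = 0

/-- `φ : K → H` witnesses an isomorphism of the quotient effect algebra `Γ(K,v)/I`
onto `Γ(H, u)`: it is an additive surjection onto `[0,u]` whose fibers on `Γ(K,v)`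
are exactly the `∼_I`-classes, and it transports the quotient order. -/
def QuotIsoWitness (v : K) (I : Set K) (u : H) (φ : K → H) : Prop :=
  (∀ x ∈ Icc (0 : K) v, φ x ∈ Icc (0 : H) u) ∧ φ v = u ∧
  (∀ x ∈ Icc (0 : K) v, ∀ y ∈ Icc (0 : K) v, x + y ≤ v → φ (x + y) = φ x + φ y) ∧
  (∀ t ∈ Icc (0 : H) u, ∃ x ∈ Icc (0 : K) v, φ x = t) ∧
  (∀ x ∈ Icc (0 : K) v, ∀ y ∈ Icc (0 : K) v, (φ x = φ y ↔ SimI I x y)) ∧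
  (∀ x ∈ Icc (0 : K) v, ∀ y ∈ Icc (0 : K) v, (φ x ≤ φ y ↔ QuotLE v I x y))

/-- The quotient effect algebra `Γ(K,v)/I` is isomorphic to `Γ(H, u)`. -/
def IsQuotIso (v : K) (I : Set K) (u : H) : Prop :=
  ∃ φ : K → H, QuotIsoWitness v I u φ

/-- The sub-effect algebra with carrier `S ⊆ Γ(K, v)` and unit `v` is isomorphic
to the interval effect algebra `Γ(L, w)`. -/
def IsSubalgebraIso (v : K) (S : Set K) (w : L) : Prop :=
  ∃ f : K → L,
    (∀ x ∈ S, f x ∈ Icc (0 : L) w) ∧ f v = w ∧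
    (∀ x ∈ S, ∀ y ∈ S, x + y ≤ v → f x + f y ≤ w ∧ f (x + y) = f x + f y) ∧
    ∃ g : L → K,
      (∀ a ∈ Icc (0 : L) w, g a ∈ S) ∧ g w = v ∧
      (∀ a ∈ Icc (0 : L) w, ∀ b ∈ Icc (0 : L) w, a + b ≤ w →
        g a + g b ≤ v ∧ g (a + b) = g a + g b) ∧
      (∀ x ∈ S, g (f x) = x) ∧ (∀ a ∈ Icc (0 : L) w, f (g a) = a)

/-- An `(H, u)`-valued state on `Γ(K, v)`, as a map of subtypes. -/
def IsSubValuedState (v : K) (u : H) (s : Icc (0 : K) v → Icc (0 : H) u) : Prop :=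
  (∀ x : Icc (0 : K) v, (x : K) = v → ((s x : H) = u)) ∧
  (∀ x y z : Icc (0 : K) v, (z : K) = (x : K) + (y : K) →
    ((s z : H) = (s x : H) + (s y : H))) ∧
  Function.Surjective s

/-- An `(H, u)`-decomposition of `Γ(K, v)`, as a family indexed by the subtype `[0,u]`
of sets of the subtype `Γ(K, v)`. -/
def IsSubDecomp (v : K) (u : H) (E : Icc (0 : H) u → Set (Icc (0 : K) v)) : Prop :=
  (∀ t, (E t).Nonempty) ∧
  (∀ s t : Icc (0 : H) u, s ≠ t → E s ∩ E t = ∅) ∧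
  (⋃ t, E t) = Set.univ ∧
  (∀ t t' : Icc (0 : H) u, (t' : H) = u - t →
    ∀ x x' : Icc (0 : K) v, (x' : K) = v - x → (x ∈ E t ↔ x' ∈ E t')) ∧
  (∀ s t : Icc (0 : H) u, ∀ x y z : Icc (0 : K) v, x ∈ E s → y ∈ E t →
    (z : K) = (x : K) + (y : K) →
    ∃ w : Icc (0 : H) u, (w : H) = (s : H) + (t : H) ∧ z ∈ E w)

end Defs

/-! Every sum in `I ∪ I⁻` that stays below `v` is again in `I ∪ I⁻`, because the ideal is
closed downwards: `x + (v - b) = v - (b - x)` and `(v - a) + (v - b) = v - (a + b - v)`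
with `b - x ≤ b` and `a + b - v ≤ a` in `I`. Minimality is immediate, since any effect
subalgebra containing `I` contains the complements of its elements. -/

section IntervalIdeal

variable {K : Type*} [AddCommGroup K] [PartialOrder K] {v : K} {I : Set K}

namespace IsIdeal

theorem mem_of_nonneg_of_le (hI : IsIdeal v I) {x y : K} (hy : y ∈ I) (hx : 0 ≤ x)
    (hxy : x ≤ y) : x ∈ I :=
  hI.2.2.1 x ⟨hx, hxy.trans (hI.2.1 hy).2⟩ y hy hxy

theorem zero_mem (hI : IsIdeal v I) : (0 : K) ∈ I :=
  let ⟨_, hy⟩ := hI.1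
  hI.mem_of_nonneg_of_le hy le_rfl (hI.2.1 hy).1

variable [IsOrderedAddMonoid K]

theorem add_compl_mem_compl (hI : IsIdeal v I) {a b : K} (ha : a ∈ I) (hb : b ∈ I)
    (hab : a + (v - b) ≤ v) : a + (v - b) ∈ (fun x => v - x) '' I := by
  have hab' : a ≤ b := by simpa using le_sub_iff_add_le.2 hab
  refine ⟨b - a, hI.mem_of_nonneg_of_le hb (sub_nonneg.2 hab') ?_, by beta_reduce; abel⟩
  exact sub_le_self b (hI.2.1 ha).1

theorem compl_add_compl_mem_compl (hI : IsIdeal v I) {a b : K} (ha : a ∈ I) (hb : b ∈ I)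
    (hab : v - a + (v - b) ≤ v) : v - a + (v - b) ∈ (fun x => v - x) '' I := by
  have hvab : v ≤ a + b := by
    calc v = v - a + (v - b) + (a + b - v) := by abel
      _ ≤ v + (a + b - v) := add_le_add_left hab _
      _ = a + b := by abel
  refine ⟨a + b - v, hI.mem_of_nonneg_of_le ha (sub_nonneg.2 hvab) ?_, by beta_reduce; abel⟩
  exact sub_le_iff_le_add.2 (add_le_add_right (hI.2.1 hb).2 a)

theorem isEffectSubalgebra_union_compl (hI : IsIdeal v I) :
    IsEffectSubalgebra v (I ∪ (fun x => v - x) '' I) := by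
  refine ⟨?_, Or.inr ⟨0, hI.zero_mem, sub_zero v⟩, ?_, ?_⟩
  · rintro _ (hx | ⟨a, ha, rfl⟩)
    · exact hI.2.1 hx
    · obtain ⟨ha0, hav⟩ := hI.2.1 ha
      exact ⟨sub_nonneg.2 hav, sub_le_self v ha0⟩
  · rintro _ (hx | ⟨a, ha, rfl⟩)
    · exact Or.inr ⟨_, hx, rfl⟩
    · exact Or.inl (by simpa using ha)
  · rintro _ (hx | ⟨a, ha, rfl⟩) _ (hy | ⟨b, hb, rfl⟩) hxy
    · exact Or.inl (hI.2.2.2 _ hx _ hy hxy)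
    · exact Or.inr (hI.add_compl_mem_compl hx hb hxy)
    · rw [add_comm] at hxy ⊢
      exact Or.inr (hI.add_compl_mem_compl hy ha hxy)
    · exact Or.inr (hI.compl_add_compl_mem_compl ha hb hxy)

end IsIdeal

theorem IsEffectSubalgebra.union_compl_subset {F : Set K} (hF : IsEffectSubalgebra v F)
    (hIF : I ⊆ F) : I ∪ (fun x => v - x) '' I ⊆ F := by
  rintro _ (hx | ⟨a, ha, rfl⟩)
  · exact hIF hx
  · exact hF.2.2.1 a (hIF ha)

end IntervalIdeal

theorem subalgebra_generated_by_ideal_general {K : Type*} [AddCommGroup K] [PartialOrder K] [IsOrderedAddMonoid K]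
    (v : K) (I : Set K) (hI : IsIdeal v I) :
    IsEffectSubalgebra v (I ∪ (fun x => v - x) '' I) ∧
    I ⊆ I ∪ (fun x => v - x) '' I ∧
    ∀ F : Set K, IsEffectSubalgebra v F → I ⊆ F → I ∪ (fun x => v - x) '' I ⊆ F :=
  ⟨hI.isEffectSubalgebra_union_compl, subset_union_left, fun _ hF hIF => hF.union_compl_subset hIF⟩

/-- The effect subalgebra of `E = Γ(K, v)` generated by an ideal `I`
is `I ∪ I⁻` where `I⁻ = {v - x : x ∈ I}`. -/
theorem subalgebra_generated_by_ideal {K : Type*} [AddCommGroup K] [PartialOrder K] [IsOrderedAddMonoid K]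
    (v : K) (hv : IsStrongUnit v) (I : Set K) (hI : IsIdeal v I) :
    IsEffectSubalgebra v (I ∪ (fun x => v - x) '' I) ∧
    I ⊆ I ∪ (fun x => v - x) '' I ∧
    ∀ F : Set K, IsEffectSubalgebra v F → I ⊆ F → I ∪ (fun x => v - x) '' I ⊆ F :=
  subalgebra_generated_by_ideal_general v I hI
end

section
/- Let (K, v) be an Abelian unital po-group with RDP and E = Γ(K, v). If I and J are lexicographic ideals of E, then I ⊆ J or J ⊆ I. Moreover, every lexicographic ideal of E is contained in Infin(E), and if some lexicographic ideal of E is a maximal ideal, then E is local. -/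
open Set

/-! For a strict ideal `I` and `x ∈ I`, `y ∈ E \ I` we have `x/I = 0/I < y/I`, hence `x < y`:
`I` lies strictly below its complement. Consequently every ideal `M` is comparable with `I`
(an element of `I \ M` would lie below all of `M`), so lexicographic ideals form a chain and a
maximal one is the only maximal ideal. Moreover, if `z ∉ I` then `z - x ∉ I` again, so
`z - n • x` never enters `I` and stays nonnegative, giving `n • x ≤ z ≤ v`. -/

section StrictIdeal

variable {K : Type*} [AddCommGroup K] [PartialOrder K] {v : K} {I : Set K}

lemma IsIdeal.zero_mem_s1 (hI : IsIdeal v I) : (0 : K) ∈ I := by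
  obtain ⟨y, hy⟩ := hI.1
  have hyE := hI.2.1 hy
  exact hI.2.2.1 0 ⟨le_rfl, hyE.1.trans hyE.2⟩ y hy hyE.1

lemma IsMaximalIdeal.eq_of_subset {M : Set K} (hI : IsMaximalIdeal v I)
    (hM : IsMaximalIdeal v M) (h : I ⊆ M) : I = M := by
  by_contra hne
  exact hM.2.1 (hI.2.2 M hM.1 (h.ssubset_of_ne hne))

variable [IsOrderedAddMonoid K]

lemma IsIdeal.sub_mem (hI : IsIdeal v I) {x e : K} (hx : x ∈ I) (he : 0 ≤ e) (hex : e ≤ x) :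
    x - e ∈ I :=
  hI.2.2.1 _ ⟨sub_nonneg.mpr hex, (sub_le_self x he).trans (hI.2.1 hx).2⟩ x hx (sub_le_self x he)

lemma IsStrictIdeal.lt_of_mem_of_notMem (hI : IsStrictIdeal v I) {x y : K} (hx : x ∈ I)
    (hy : y ∈ Icc 0 v) (hyI : y ∉ I) : x < y := by
  have h0 : (0 : K) ∈ I := hI.1.zero_mem_s1
  refine hI.2 x (hI.1.2.1 hx) y hy ⟨?_, ?_⟩
  · exact ⟨0, hI.1.2.1 h0, ⟨0, h0, x, hx, le_rfl, le_rfl, by simp⟩, hy.1⟩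
  · rintro ⟨e, he, f, hf, hex, -, heq⟩
    have hy_eq : y = f + (x - e) := by rw [heq]; abel
    exact hyI (hy_eq ▸ hI.1.2.2.2 f hf (x - e)
      (hI.1.sub_mem hx (hI.1.2.1 he).1 hex) (hy_eq ▸ hy.2))

lemma IsStrictIdeal.subset_or_subset (hI : IsStrictIdeal v I) {M : Set K} (hM : IsIdeal v M) :
    I ⊆ M ∨ M ⊆ I := by
  refine or_iff_not_imp_left.mpr fun hIM b hb => ?_
  obtain ⟨a, haI, haM⟩ := not_subset.mp hIM
  by_contra hbI
  exact haM (hM.2.2.1 a (hI.1.2.1 haI) b hb (hI.lt_of_mem_of_notMem haI (hM.2.1 hb) hbI).le)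

lemma IsStrictIdeal.sub_mem_diff (hI : IsStrictIdeal v I) {x z : K} (hx : x ∈ I)
    (hz : z ∈ Icc 0 v \ I) : z - x ∈ Icc 0 v \ I := by
  have hxz := hI.lt_of_mem_of_notMem hx hz.1 hz.2
  refine ⟨⟨sub_nonneg.mpr hxz.le, (sub_le_self z (hI.1.2.1 hx).1).trans hz.1.2⟩, fun hzx => ?_⟩
  have hsum := hI.1.2.2.2 _ hzx x hx (by simpa using hz.1.2)
  exact hz.2 (by simpa using hsum)

lemma IsStrictIdeal.subset_infin (hI : IsStrictIdeal v I) (hne : I ≠ Icc 0 v) :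
    I ⊆ Infin v := by
  intro x hx
  obtain ⟨z, hz⟩ : (Icc 0 v \ I).Nonempty :=
    sdiff_nonempty.mpr fun h => hne (hI.1.2.1.antisymm h)
  have hzn : ∀ n : ℕ, z - n • x ∈ Icc 0 v \ I := by
    intro n
    induction n with
    | zero => simpa using hz
    | succ k ih =>
      rw [succ_nsmul, ← sub_sub]
      exact hI.sub_mem_diff hx ih
  exact ⟨hI.1.2.1 hx, fun n => (sub_nonneg.mp (hzn n).1.1).trans hz.1.2⟩

end StrictIdeal

theorem lexIdeals_linearly_ordered_general {K : Type*} [AddCommGroup K] [PartialOrder K] [IsOrderedAddMonoid K]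
    (v : K) :
    (∀ I J : Set K, IsLexIdeal v I → IsLexIdeal v J → I ⊆ J ∨ J ⊆ I) ∧
    (∀ I : Set K, IsLexIdeal v I → I ⊆ Infin v) ∧
    ((∃ I : Set K, IsLexIdeal v I ∧ IsMaximalIdeal v I) → IsLocal v) := by
  refine ⟨fun I J hI hJ => hI.2.2.2.1.subset_or_subset hJ.1,
    fun I hI => hI.2.2.2.1.subset_infin hI.2.2.1, ?_⟩
  rintro ⟨I, hI, hImax⟩
  refine ⟨I, hImax, fun M hM => ?_⟩
  rcases hI.2.2.2.1.subset_or_subset hM.1 with h | h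
  · exact (hImax.eq_of_subset hM h).symm
  · exact hM.eq_of_subset hImax h

/-- Lexicographic ideals of `E = Γ(K, v)` are linearly ordered by
inclusion, each is contained in `Infin E`, and if one of them is maximal then
`E` is local. -/
theorem lexIdeals_linearly_ordered {K : Type*} [AddCommGroup K] [PartialOrder K] [IsOrderedAddMonoid K]
    (v : K) (hv : IsStrongUnit v) (hK : RDP K) :
    (∀ I J : Set K, IsLexIdeal v I → IsLexIdeal v J → I ⊆ J ∨ J ⊆ I) ∧
    (∀ I : Set K, IsLexIdeal v I → I ⊆ Infin v) ∧
    ((∃ I : Set K, IsLexIdeal v I ∧ IsMaximalIdeal v I) → IsLocal v) :=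
  lexIdeals_linearly_ordered_general v
end

section
/- Let (H, u) be a nontrivial antilattice Abelian unital po-group with RDP and let G be a nontrivial directed Abelian po-group with RDP. Then I = {(0, g) : g ∈ G, g ≥ 0} is a lexicographic ideal of the interval effect algebra E = Γ(H ×ₗ G, (u, 0)); that is, I is an ideal of E that is strict, retractive and prime, with {0} ≠ I ≠ E. -/
open Set

/-! Two elements of `Γ(H ×ₗ G, (u, 0))` are `∼_I`-equivalent exactly when their first coordinates
agree (directedness of `G` supplies the witnesses), which gives strictness and the retraction
`(h, g) ↦ (h, 0)`. For primeness, in an antilattice with RDP two strictly positive elements have a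
strictly positive common lower bound `t`; if `x, y ∉ I`, then `(t, s)`, with `s` below both
second coordinates, lies in `I₀(x) ∩ I₀(y)` but not in `I`. -/

section PoGroup

variable {K : Type*} [AddCommGroup K] [PartialOrder K] [IsOrderedAddMonoid K]

theorem IsStrongUnit.pos [Nontrivial K] {u : K} (hu : IsStrongUnit u) : 0 < u := by
  refine hu.1.lt_of_ne fun hu0 => ?_
  have hle : ∀ g : K, g ≤ 0 := fun g => by
    obtain ⟨n, hn⟩ := hu.2 g
    rwa [← hu0, smul_zero] at hn
  obtain ⟨g, hg⟩ := exists_ne (0 : K)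
  exact hg (le_antisymm (hle g) (neg_nonpos.1 (hle (-g))))

theorem IsDirectedGroup.exists_le_le (hK : IsDirectedGroup K) (a b : K) :
    ∃ c, c ≤ a ∧ c ≤ b := by
  obtain ⟨c, hac, hbc⟩ := hK (-a) (-b)
  exact ⟨-c, neg_le.1 hac, neg_le.1 hbc⟩

theorem IsDirectedGroup.exists_nonneg_ne_zero [Nontrivial K] (hK : IsDirectedGroup K) :
    ∃ g : K, 0 ≤ g ∧ g ≠ 0 := by
  obtain ⟨a, ha⟩ := exists_ne (0 : K)
  obtain ⟨c, hac, hc⟩ := hK a 0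
  rcases eq_or_ne c 0 with rfl | hc0
  · exact ⟨-a, neg_nonneg.2 hac, neg_ne_zero.2 ha⟩
  · exact ⟨c, hc, hc0⟩

theorem RDP.riesz_interpolation (hK : RDP K) {a₁ a₂ b₁ b₂ : K}
    (h₁₁ : a₁ ≤ b₁) (h₁₂ : a₁ ≤ b₂) (h₂₁ : a₂ ≤ b₁) (h₂₂ : a₂ ≤ b₂) :
    ∃ z, a₁ ≤ z ∧ a₂ ≤ z ∧ z ≤ b₁ ∧ z ≤ b₂ := by
  obtain ⟨c₁₁, c₁₂, c₂₁, c₂₂, hc₁₁, hc₁₂, hc₂₁, hc₂₂, e₁, -, e₃, e₄⟩ :=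
    hK (b₁ - a₁) (b₂ - a₂) (b₂ - a₁) (b₁ - a₂) (sub_nonneg.2 h₁₁) (sub_nonneg.2 h₂₂)
      (sub_nonneg.2 h₁₂) (sub_nonneg.2 h₂₁) (by abel)
  refine ⟨a₁ + c₁₁, le_add_of_nonneg_right hc₁₁, ?_, ?_, ?_⟩
  · rw [← sub_nonneg, show a₁ + c₁₁ - a₂ = c₂₂ by linear_combination (norm := module) e₄ - e₁]
    exact hc₂₂
  · rw [← sub_nonneg, show b₁ - (a₁ + c₁₁) = c₁₂ by linear_combination (norm := module) e₁]
    exact hc₁₂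
  · rw [← sub_nonneg, show b₂ - (a₁ + c₁₁) = c₂₁ by linear_combination (norm := module) e₃]
    exact hc₂₁

/-- If `a` and `b` had no strictly positive common lower bound, interpolation would make `0`
their infimum, and the antilattice property would make them comparable. -/
theorem IsAntilattice.exists_pos_le_le (hanti : IsAntilattice K) (hK : RDP K) {a b : K}
    (ha : 0 < a) (hb : 0 < b) : ∃ t, 0 < t ∧ t ≤ a ∧ t ≤ b := by
  by_contra! hno
  have hglb : IsGLB {a, b} (0 : K) := by
    refine ⟨by simp [ha.le, hb.le], fun w hw => ?_⟩
    obtain ⟨z, hz, hwz, hza, hzb⟩ :=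
      hK.riesz_interpolation ha.le hb.le (hw (by simp)) (hw (by simp))
    obtain rfl : z = 0 := by_contra fun hz0 => hno z (hz.lt_of_ne' hz0) hza hzb
    exact hwz
  rcases hanti a b (Or.inr ⟨0, hglb⟩) with hab | hba
  · exact hno a ha le_rfl hab
  · exact hno b hb hba le_rfl

end PoGroup

section ZeroCone

variable {H G : Type*} [AddCommGroup H] [AddCommGroup G] [PartialOrder G]

def zeroCone : Set (H ×ₗ G) := {p | (ofLex p).1 = 0 ∧ 0 ≤ (ofLex p).2}

theorem zeroCone_ne_singleton_zero [IsOrderedAddMonoid G] [Nontrivial G]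
    (hG : IsDirectedGroup G) : (zeroCone : Set (H ×ₗ G)) ≠ {0} := by
  obtain ⟨g, hg, hg0⟩ := hG.exists_nonneg_ne_zero
  intro h
  have hmem : toLex ((0 : H), g) ∈ (zeroCone : Set (H ×ₗ G)) := ⟨rfl, hg⟩
  rw [h, Set.mem_singleton_iff] at hmem
  exact hg0 (congrArg (fun p => (ofLex p).2) hmem)

variable [PartialOrder H]

theorem mem_zeroCone_iff_fst_eq_zero {x : H ×ₗ G} (hx : 0 ≤ x) :
    x ∈ zeroCone ↔ (ofLex x).1 = 0 :=
  ⟨And.left, fun h => ⟨h, (Prod.Lex.le_iff'.1 hx).2 h.symm⟩⟩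

theorem fst_pos_of_notMem_zeroCone {x : H ×ₗ G} (hx : 0 ≤ x) (hxI : x ∉ zeroCone) :
    0 < (ofLex x).1 :=
  (Prod.Lex.monotone_fst 0 x hx).lt_of_ne fun h =>
    hxI ((mem_zeroCone_iff_fst_eq_zero hx).2 h.symm)

theorem zeroCone_ne_Icc {u : H} (hu : 0 < u) :
    (zeroCone : Set (H ×ₗ G)) ≠ Icc 0 (toLex (u, 0)) := by
  intro h
  have hv : toLex (u, (0 : G)) ∈ Icc 0 (toLex (u, 0)) :=
    ⟨Prod.Lex.toLex_mono ⟨hu.le, le_rfl⟩, le_rfl⟩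
  exact hu.ne' (h ▸ hv).1

theorem fst_eq_of_simI_zeroCone {x y : H ×ₗ G} (h : SimI zeroCone x y) :
    (ofLex x).1 = (ofLex y).1 := by
  obtain ⟨e, he, f, hf, -, -, hxy⟩ := h
  simpa [he.1, hf.1] using congrArg (fun p => (ofLex p).1) hxy

variable [IsOrderedAddMonoid G] {u : H}

theorem isIdeal_zeroCone (hu : 0 < u) : IsIdeal (toLex (u, (0 : G))) zeroCone := by
  refine ⟨⟨0, rfl, le_rfl⟩, fun p hp => ⟨?_, ?_⟩, fun x hx y hy hxy => ?_, fun x hx y hy _ => ?_⟩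
  · exact Prod.Lex.le_iff'.2 ⟨hp.1.ge, fun _ => hp.2⟩
  · exact Prod.Lex.le_iff'.2 ⟨hp.1 ▸ hu.le, fun h => absurd (hp.1 ▸ h) hu.ne⟩
  · refine (mem_zeroCone_iff_fst_eq_zero hx.1).2 (le_antisymm ?_ (Prod.Lex.monotone_fst 0 x hx.1))
    exact hy.1 ▸ Prod.Lex.monotone_fst x y hxy
  · exact ⟨by simp [hx.1, hy.1], by simpa using add_nonneg hx.2 hy.2⟩

/-- With positive first coordinates every `(0, c)` with `c ≥ 0` lies below `x`, so `c` can be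
taken above `x₂ - y₂` to match the second coordinates. -/
theorem simI_zeroCone_of_fst_eq (hG : IsDirectedGroup G) {x y : H ×ₗ G} (hx : 0 ≤ x)
    (hy : 0 ≤ y) (h : (ofLex x).1 = (ofLex y).1) : SimI zeroCone x y := by
  rcases (Prod.Lex.monotone_fst 0 x hx).eq_or_lt with h0 | hpos
  · exact ⟨x, (mem_zeroCone_iff_fst_eq_zero hx).2 h0.symm,
      y, (mem_zeroCone_iff_fst_eq_zero hy).2 (h ▸ h0.symm), le_rfl, le_rfl, by simp⟩
  · obtain ⟨c, hc, hcxy⟩ := hG 0 ((ofLex x).2 - (ofLex y).2)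
    refine ⟨toLex (0, c), ⟨rfl, hc⟩, toLex (0, c - ((ofLex x).2 - (ofLex y).2)),
      ⟨rfl, sub_nonneg.2 hcxy⟩, Prod.Lex.le_iff.2 (Or.inl hpos),
      Prod.Lex.le_iff.2 (Or.inl (h ▸ hpos)), ?_⟩
    apply ofLex.injective
    ext
    · simpa using h
    · simp only [ofLex_sub, ofLex_toLex, Prod.snd_sub]
      abel

theorem simI_zeroCone_iff (hG : IsDirectedGroup G) {x y : H ×ₗ G} (hx : 0 ≤ x) (hy : 0 ≤ y) :
    SimI zeroCone x y ↔ (ofLex x).1 = (ofLex y).1 :=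
  ⟨fst_eq_of_simI_zeroCone, simI_zeroCone_of_fst_eq hG hx hy⟩

theorem isStrictIdeal_zeroCone (hu : 0 < u) (hG : IsDirectedGroup G) :
    IsStrictIdeal (toLex (u, (0 : G))) zeroCone := by
  refine ⟨isIdeal_zeroCone hu, ?_⟩
  rintro x hx y hy ⟨⟨x₁, -, hx₁, hx₁y⟩, hxy⟩
  rw [simI_zeroCone_iff hG hx.1 hy.1] at hxy
  have hle : (ofLex x).1 ≤ (ofLex y).1 :=
    fst_eq_of_simI_zeroCone hx₁ ▸ Prod.Lex.monotone_fst x₁ y hx₁y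
  exact Prod.Lex.lt_iff.2 (Or.inl (hle.lt_of_ne hxy))

theorem isRetractiveIdeal_zeroCone (hu : 0 < u) (hG : IsDirectedGroup G) :
    IsRetractiveIdeal (toLex (u, (0 : G))) zeroCone := by
  let r := (OrderAddMonoidHom.inlₗ H G).comp (OrderAddMonoidHom.fstₗ H G)
  have hr : ∀ x, (ofLex (r x)).1 = (ofLex x).1 := fun _ => rfl
  refine ⟨isIdeal_zeroCone hu, r, fun x hx => ⟨?_, ?_⟩, rfl, fun x _ y _ _ => map_add r x y,
    fun x hx => ?_, fun x _ y _ hxy => ?_⟩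
  · simpa using r.monotone' hx.1
  · exact r.monotone' hx.2
  · have hrx : 0 ≤ r x := by simpa using r.monotone' hx.1
    exact simI_zeroCone_of_fst_eq hG hrx hx.1 (hr x)
  · simp [r, fst_eq_of_simI_zeroCone hxy]

variable [IsOrderedAddMonoid H]

theorem isPrimeIdeal_zeroCone (hu : 0 < u) (hH : RDP H) (hanti : IsAntilattice H)
    (hG : IsDirectedGroup G) : IsPrimeIdeal (toLex (u, (0 : G))) zeroCone := by
  refine ⟨isIdeal_zeroCone hu, fun x hx y hy hsub => ?_⟩
  by_contra! hxy
  obtain ⟨t, ht, htx, hty⟩ := hanti.exists_pos_le_le hH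
    (fst_pos_of_notMem_zeroCone hx.1 hxy.1) (fst_pos_of_notMem_zeroCone hy.1 hxy.2)
  obtain ⟨s, hsx, hsy⟩ := hG.exists_le_le (ofLex x).2 (ofLex y).2
  have hzx : toLex (t, s) ≤ x := Prod.Lex.toLex_mono (b := ofLex x) ⟨htx, hsx⟩
  have hzy : toLex (t, s) ≤ y := Prod.Lex.toLex_mono (b := ofLex y) ⟨hty, hsy⟩
  have hz : toLex (t, s) ∈ Icc 0 (toLex (u, 0)) :=
    ⟨Prod.Lex.le_iff.2 (Or.inl ht), hzx.trans hx.2⟩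
  have hgen : ∀ {a}, toLex (t, s) ≤ a → toLex (t, s) ∈ IdealGen (toLex (u, 0)) a :=
    fun hza => ⟨hz, [toLex (t, s)], by simp, by simpa using ⟨hz, hza⟩, by simp⟩
  exact ht.ne' (hsub ⟨hgen hzx, hgen hzy⟩).1

end ZeroCone

theorem zero_cone_is_lexIdeal_general {H G : Type*} [AddCommGroup H] [PartialOrder H] [IsOrderedAddMonoid H] [AddCommGroup G] [PartialOrder G] [IsOrderedAddMonoid G]
    [Nontrivial H] [Nontrivial G] (u : H) (hu : IsStrongUnit u) (hH : RDP H)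
    (hanti : IsAntilattice H) (hG : IsDirectedGroup G) :
    IsLexIdeal (toLex (u, (0 : G)))
      {p : H ×ₗ G | (ofLex p).1 = 0 ∧ 0 ≤ (ofLex p).2} :=
  ⟨isIdeal_zeroCone hu.pos, zeroCone_ne_singleton_zero hG, zeroCone_ne_Icc hu.pos,
    isStrictIdeal_zeroCone hu.pos hG, isRetractiveIdeal_zeroCone hu.pos hG,
    isPrimeIdeal_zeroCone hu.pos hH hanti hG⟩

/-- For a nontrivial antilattice Abelian unital po-group `(H, u)` with RDP
and a nontrivial directed Abelian po-group `G` with RDP, the set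
`I = {(0, g) : g ∈ G⁺}` is a lexicographic ideal of `E = Γ(H ×ₗ G, (u, 0))`. -/
theorem zero_cone_is_lexIdeal {H G : Type*} [AddCommGroup H] [PartialOrder H] [IsOrderedAddMonoid H] [AddCommGroup G] [PartialOrder G] [IsOrderedAddMonoid G]
    [Nontrivial H] [Nontrivial G] (u : H) (hu : IsStrongUnit u) (hH : RDP H)
    (hanti : IsAntilattice H) (hG : IsDirectedGroup G) (hRG : RDP G) :
    IsLexIdeal (toLex (u, (0 : G)))
      {p : H ×ₗ G | (ofLex p).1 = 0 ∧ 0 ≤ (ofLex p).2} :=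
  zero_cone_is_lexIdeal_general u hu hH hanti hG
end

section
/- Let (K, v) be an Abelian unital po-group, E = Γ(K, v), and let (H, u) be an Abelian unital po-group. Then E admits an (H, u)-valued state if and only if E admits an (H, u)-decomposition. Moreover, the assignment sending an (H, u)-decomposition (E_t : t ∈ [0,u]_H) to the map s with s(x) = t iff x ∈ E_t is a bijection between the set of all (H, u)-decompositions of E and the set of all (H, u)-valued states on E. -/
open Set

/-! A decomposition is nothing but the family of fibres of a valued state: the blocks `E t`
form an indexed partition of `Γ(K, v)`, the index map of that partition is additive, sends `v`
to `u` and is onto by the axioms of a decomposition, and conversely the fibres of a valued state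
satisfy those axioms. The two passages are mutually inverse. -/

section

variable {K H : Type*} [AddCommGroup K] [PartialOrder K] [AddCommGroup H] [PartialOrder H]
  {v : K} {u : H}

namespace IsSubValuedState

variable {s : Icc (0 : K) v → Icc (0 : H) u}

theorem apply_sub (hs : IsSubValuedState v u s) {x x' : Icc (0 : K) v} (hx' : (x' : K) = v - x) :
    (s x' : H) = u - s x := by
  have hv : ((⟨v, x.2.1.trans x.2.2, le_rfl⟩ : Icc (0 : K) v) : K) = x + x' := by
    rw [hx', add_sub_cancel]
  rw [eq_sub_iff_add_eq', ← hs.2.1 _ _ _ hv, hs.1 _ rfl]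

theorem isSubDecomp_fibers (hs : IsSubValuedState v u s) :
    IsSubDecomp v u (fun t => s ⁻¹' {t}) := by
  refine ⟨hs.2.2, ?_, ?_, ?_, ?_⟩
  · intro t t' htt'
    exact Set.disjoint_iff_inter_eq_empty.1 ((Set.disjoint_singleton.2 htt').preimage s)
  · exact Set.eq_univ_of_forall fun x => Set.mem_iUnion.2 ⟨s x, rfl⟩
  · intro t t' ht' x x' hx'
    change s x = t ↔ s x' = t'
    rw [← Subtype.coe_inj, ← Subtype.coe_inj (a := s x'), hs.apply_sub hx', ht', sub_right_inj]
  · intro a b x y z hx hy hz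
    refine ⟨s z, ?_, rfl⟩
    rw [hs.2.1 x y z hz, hx, hy]

end IsSubValuedState

namespace IsSubDecomp

variable {E : Icc (0 : H) u → Set (Icc (0 : K) v)}

noncomputable def indexedPartition (hE : IsSubDecomp v u E) : IndexedPartition E :=
  .mk' E (fun _ _ hst => Set.disjoint_iff_inter_eq_empty.2 (hE.2.1 _ _ hst)) hE.1
    fun x => Set.mem_iUnion.1 (hE.2.2.1 ▸ Set.mem_univ x)

theorem index_add (hE : IsSubDecomp v u E) {x y z : Icc (0 : K) v} (hz : (z : K) = x + y) :
    (hE.indexedPartition.index z : H) =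
      hE.indexedPartition.index x + hE.indexedPartition.index y := by
  set P := hE.indexedPartition
  obtain ⟨w, hw, hzw⟩ := hE.2.2.2.2 _ _ x y z (P.mem_index x) (P.mem_index y) hz
  rw [P.mem_iff_index_eq.1 hzw, hw]

theorem isSubValuedState_index (hE : IsSubDecomp v u E) :
    IsSubValuedState v u hE.indexedPartition.index := by
  set P := hE.indexedPartition
  refine ⟨fun x hx => ?_, fun _ _ _ => hE.index_add,
    fun t => (hE.1 t).imp fun _ => P.mem_iff_index_eq.1⟩
  -- `0 = 0 + 0` puts `0` in `E 0`, so its complement `v` lies in `E u`.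
  let zero : Icc (0 : K) v := ⟨0, le_rfl, x.2.1.trans x.2.2⟩
  have hzero : (P.index zero : H) = 0 :=
    left_eq_add.1 (hE.index_add (x := zero) (y := zero) (add_zero 0).symm)
  let top : Icc (0 : H) u := ⟨u, (P.index zero).2.1.trans (P.index zero).2.2, le_rfl⟩
  have hx_mem : x ∈ E top :=
    (hE.2.2.2.1 (P.index zero) top (by simp only [top, hzero, sub_zero]) zero x
      (by rw [hx, sub_zero])).1 (P.mem_index zero)
  rw [P.mem_iff_index_eq.1 hx_mem]

end IsSubDecomp

end

theorem valuedState_iff_decomposition_general {K H : Type*}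
    [AddCommGroup K] [PartialOrder K] [AddCommGroup H] [PartialOrder H]
    (v : K) (u : H) :
    ((∃ s : Icc (0 : K) v → Icc (0 : H) u, IsSubValuedState v u s) ↔
      (∃ E : Icc (0 : H) u → Set (Icc (0 : K) v), IsSubDecomp v u E)) ∧
    ∃ F : {E : Icc (0 : H) u → Set (Icc (0 : K) v) // IsSubDecomp v u E} →
          {s : Icc (0 : K) v → Icc (0 : H) u // IsSubValuedState v u s},
      (∀ D : {E : Icc (0 : H) u → Set (Icc (0 : K) v) // IsSubDecomp v u E},
        ∀ (t : Icc (0 : H) u) (x : Icc (0 : K) v), x ∈ D.1 t ↔ (F D).1 x = t) ∧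
      Function.Bijective F := by
  refine ⟨⟨fun ⟨_, hs⟩ => ⟨_, hs.isSubDecomp_fibers⟩, fun ⟨_, hE⟩ => ⟨_, hE.isSubValuedState_index⟩⟩,
    fun D => ⟨_, D.2.isSubValuedState_index⟩, fun D _ _ => D.2.indexedPartition.mem_iff_index_eq, ?_⟩
  refine Function.bijective_iff_has_inverse.2
    ⟨fun S => ⟨_, S.2.isSubDecomp_fibers⟩, fun D => ?_, fun S => ?_⟩
  · exact Subtype.ext (funext fun t => (D.2.indexedPartition.eq t).symm)
  · exact Subtype.ext (funext fun x =>
      (S.2.isSubDecomp_fibers.indexedPartition.mem_iff_index_eq (i := S.1 x)).1 rfl)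

/-- `E = Γ(K, v)` admits an `(H, u)`-valued state iff it admits an
`(H, u)`-decomposition, and the assignment sending a decomposition
`(E_t : t ∈ [0,u]_H)` to the state `s` with `s x = t ↔ x ∈ E_t` is a bijection
between the set of `(H, u)`-decompositions and the set of `(H, u)`-valued states. -/
theorem valuedState_iff_decomposition {K H : Type*}
    [AddCommGroup K] [PartialOrder K] [IsOrderedAddMonoid K] [AddCommGroup H] [PartialOrder H] [IsOrderedAddMonoid H]
    (v : K) (u : H) (hv : IsStrongUnit v) (hu : IsStrongUnit u) :
    ((∃ s : Icc (0 : K) v → Icc (0 : H) u, IsSubValuedState v u s) ↔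
      (∃ E : Icc (0 : H) u → Set (Icc (0 : K) v), IsSubDecomp v u E)) ∧
    ∃ F : {E : Icc (0 : H) u → Set (Icc (0 : K) v) // IsSubDecomp v u E} →
          {s : Icc (0 : K) v → Icc (0 : H) u // IsSubValuedState v u s},
      (∀ D : {E : Icc (0 : H) u → Set (Icc (0 : K) v) // IsSubDecomp v u E},
        ∀ (t : Icc (0 : H) u) (x : Icc (0 : K) v), x ∈ D.1 t ↔ (F D).1 x = t) ∧
      Function.Bijective F :=
  valuedState_iff_decomposition_general v u
end

section
/- Let (K, v) and (H, u) be Abelian unital po-groups and let (E_t : t ∈ [0,u]_H) be an (H, u)-decomposition of E = Γ(K, v). Then (E_t) is ordered if and only if for all w, t ∈ [0,u]_H with w + t < u, every x ∈ E_w and y ∈ E_t satisfy x + y ≤ v. In that case, for all s, t ∈ [0,u]_H with s + t < u one has {x + y : x ∈ E_s, y ∈ E_t} = E_{s+t}, and for all s, t ∈ [0,u]_H with s + t > u, no x ∈ E_s and y ∈ E_t satisfy x + y ≤ v. -/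
open Set

/-! Complementation `x ↦ v - x` maps `E t` onto `E (u - t)`, so `x + y ≤ v` says `y ≤ v - x`
with `v - x ∈ E (u - w)` for `x ∈ E w`: definedness of sums over `w + t < u` is exactly the
comparison of `E t` with `E (u - w)` for `t < u - w`. Conversely, once the decomposition is
ordered, each `z ∈ E (s + t)` lies above some `x ∈ E s`, and `z - x` is forced into `E t`
because the `E r` are disjoint and the indices add. -/

section Decomp

variable {K H : Type*} [AddCommGroup K] [PartialOrder K] [AddCommGroup H] [PartialOrder H]
  {v : K} {u : H} {E : H → Set K}

theorem sub_mem_Icc_zero [IsOrderedAddMonoid H] {t : H} (ht : t ∈ Icc (0 : H) u) :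
    u - t ∈ Icc (0 : H) u :=
  ⟨sub_nonneg.2 ht.2, sub_le_self u ht.1⟩

namespace IsDecomp

theorem subset_Icc (hE : IsDecomp v u E) {t : H} (ht : t ∈ Icc (0 : H) u) :
    E t ⊆ Icc 0 v := by
  rw [← hE.2.2.1]
  exact subset_biUnion_of_mem ht

theorem exists_mem (hE : IsDecomp v u E) {x : K} (hx : x ∈ Icc (0 : K) v) :
    ∃ r ∈ Icc (0 : H) u, x ∈ E r := by
  rw [← hE.2.2.1] at hx
  simpa using hx

theorem eq_of_mem (hE : IsDecomp v u E) {s t : H} (hs : s ∈ Icc (0 : H) u)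
    (ht : t ∈ Icc (0 : H) u) {x : K} (hxs : x ∈ E s) (hxt : x ∈ E t) : s = t := by
  by_contra hst
  have hx : x ∈ E s ∩ E t := ⟨hxs, hxt⟩
  rwa [hE.2.1 s hs t ht hst] at hx

theorem sub_mem (hE : IsDecomp v u E) {t : H} (ht : t ∈ Icc (0 : H) u) {x : K}
    (hx : x ∈ E t) : v - x ∈ E (u - t) :=
  hE.2.2.2.1 t ht ▸ mem_image_of_mem _ hx

theorem add_le (hE : IsDecomp v u E) {s t : H} (hs : s ∈ Icc (0 : H) u)
    (ht : t ∈ Icc (0 : H) u) {x y : K} (hx : x ∈ E s) (hy : y ∈ E t) (hxy : x + y ≤ v) :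
    s + t ≤ u :=
  (hE.2.2.2.2 s hs t ht x hx y hy hxy).1

theorem add_mem (hE : IsDecomp v u E) {s t : H} (hs : s ∈ Icc (0 : H) u)
    (ht : t ∈ Icc (0 : H) u) {x y : K} (hx : x ∈ E s) (hy : y ∈ E t) (hxy : x + y ≤ v) :
    x + y ∈ E (s + t) :=
  (hE.2.2.2.2 s hs t ht x hx y hy hxy).2

theorem not_add_le_of_lt_add (hE : IsDecomp v u E) {s t : H} (hs : s ∈ Icc (0 : H) u)
    (ht : t ∈ Icc (0 : H) u) (hst : u < s + t) {x y : K} (hx : x ∈ E s) (hy : y ∈ E t) :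
    ¬ x + y ≤ v :=
  fun hxy => (hE.add_le hs ht hx hy hxy).not_gt hst

theorem mem_of_add_mem [IsOrderedAddMonoid K] [IsOrderedAddMonoid H] (hE : IsDecomp v u E)
    {s t : H} (hs : s ∈ Icc (0 : H) u) (hst : s + t ∈ Icc (0 : H) u) {x y : K} (hx : x ∈ E s)
    (hy : 0 ≤ y) (hxy : x + y ∈ E (s + t)) : y ∈ E t := by
  have hxyv : x + y ≤ v := (hE.subset_Icc hst hxy).2
  have hyv : y ≤ v := (le_add_of_nonneg_left (hE.subset_Icc hs hx).1).trans hxyv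
  obtain ⟨r, hr, hyr⟩ := hE.exists_mem ⟨hy, hyv⟩
  have hsr : s + r ∈ Icc (0 : H) u := ⟨add_nonneg hs.1 hr.1, hE.add_le hs hr hx hyr hxyv⟩
  have hrt : s + r = s + t := hE.eq_of_mem hsr hst (hE.add_mem hs hr hx hyr hxyv) hxy
  exact add_left_cancel hrt ▸ hyr

theorem isOrderedDecomp_of_add_le [IsOrderedAddMonoid K] [IsOrderedAddMonoid H]
    (hE : IsDecomp v u E)
    (hsum : ∀ w ∈ Icc (0 : H) u, ∀ t ∈ Icc (0 : H) u, w + t < u →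
      ∀ x ∈ E w, ∀ y ∈ E t, x + y ≤ v) :
    IsOrderedDecomp v u E := by
  refine ⟨hE, fun s hs t ht hst x hx y hy => ?_⟩
  have hlt : s + (u - t) < u := by
    rw [show s + (u - t) = u - (t - s) by abel]
    exact sub_lt_self u (sub_pos.2 hst)
  have hxy : x ≤ y := by
    have := hsum s hs (u - t) (sub_mem_Icc_zero ht) hlt x hx (v - y) (hE.sub_mem ht hy)
    rwa [add_sub_left_comm, add_le_iff_nonpos_right, sub_nonpos] at this
  exact hxy.lt_of_ne fun h => hst.ne (hE.eq_of_mem hs ht hx (h ▸ hy))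

end IsDecomp

namespace IsOrderedDecomp

theorem add_le_of_add_lt [IsOrderedAddMonoid K] [IsOrderedAddMonoid H]
    (hE : IsOrderedDecomp v u E) {w t : H} (hw : w ∈ Icc (0 : H) u) (ht : t ∈ Icc (0 : H) u)
    (hwt : w + t < u) {x y : K} (hx : x ∈ E w) (hy : y ∈ E t) : x + y ≤ v := by
  have hyx : y < v - x :=
    hE.2 t ht (u - w) (sub_mem_Icc_zero hw) (lt_sub_iff_add_lt'.2 hwt) y hy (v - x)
      (hE.1.sub_mem hw hx)
  exact (lt_sub_iff_add_lt'.1 hyx).le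

theorem exists_mem_le (hE : IsOrderedDecomp v u E) {s t : H} (hs : s ∈ Icc (0 : H) u)
    (ht : t ∈ Icc (0 : H) u) (hst : s ≤ t) {z : K} (hz : z ∈ E t) : ∃ x ∈ E s, x ≤ z := by
  rcases hst.eq_or_lt with rfl | hst
  · exact ⟨z, hz, le_rfl⟩
  · obtain ⟨x, hx⟩ := hE.1.1 s hs
    exact ⟨x, hx, (hE.2 s hs t ht hst x hx z hz).le⟩

theorem setOf_add_eq [IsOrderedAddMonoid K] [IsOrderedAddMonoid H]
    (hE : IsOrderedDecomp v u E) {s t : H} (hs : s ∈ Icc (0 : H) u) (ht : t ∈ Icc (0 : H) u)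
    (hst : s + t < u) :
    {z : K | ∃ x ∈ E s, ∃ y ∈ E t, x + y ≤ v ∧ x + y = z} = E (s + t) := by
  have hst' : s + t ∈ Icc (0 : H) u := ⟨add_nonneg hs.1 ht.1, hst.le⟩
  ext z
  constructor
  · rintro ⟨x, hx, y, hy, hxy, rfl⟩
    exact hE.1.add_mem hs ht hx hy hxy
  · intro hz
    obtain ⟨x, hx, hxz⟩ := hE.exists_mem_le hs hst' (le_add_of_nonneg_right ht.1) hz
    have hxzx : x + (z - x) = z := add_sub_cancel x z
    have hzx : z - x ∈ E t :=
      hE.1.mem_of_add_mem hs hst' hx (sub_nonneg.2 hxz) (hxzx.symm ▸ hz)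
    exact ⟨x, hx, z - x, hzx, hxzx.symm ▸ (hE.1.subset_Icc hst' hz).2, hxzx⟩

end IsOrderedDecomp

end Decomp

theorem orderedDecomp_iff_sums_defined_general {K H : Type*}
    [AddCommGroup K] [PartialOrder K] [IsOrderedAddMonoid K] [AddCommGroup H] [PartialOrder H] [IsOrderedAddMonoid H]
    (v : K) (u : H)
    (E : H → Set K) (hE : IsDecomp v u E) :
    (IsOrderedDecomp v u E ↔
      ∀ w ∈ Icc (0 : H) u, ∀ t ∈ Icc (0 : H) u, w + t < u →
        ∀ x ∈ E w, ∀ y ∈ E t, x + y ≤ v) ∧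
    (IsOrderedDecomp v u E →
      (∀ s ∈ Icc (0 : H) u, ∀ t ∈ Icc (0 : H) u, s + t < u →
        {z : K | ∃ x ∈ E s, ∃ y ∈ E t, x + y ≤ v ∧ x + y = z} = E (s + t)) ∧
      (∀ s ∈ Icc (0 : H) u, ∀ t ∈ Icc (0 : H) u, u < s + t →
        ∀ x ∈ E s, ∀ y ∈ E t, ¬ x + y ≤ v)) :=
  ⟨⟨fun hord _ hw _ ht hwt _ hx _ hy => hord.add_le_of_add_lt hw ht hwt hx hy,
      hE.isOrderedDecomp_of_add_le⟩,
    fun hord => ⟨fun _ hs _ ht hst => hord.setOf_add_eq hs ht hst,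
      fun _ hs _ ht hst _ hx _ hy => hE.not_add_le_of_lt_add hs ht hst hx hy⟩⟩

/-- An `(H, u)`-decomposition is ordered iff all sums across indices
`w + t < u` are defined; in that case `E_s + E_t = E_{s+t}` whenever `s + t < u`,
and no sum across indices with `s + t > u` is defined. -/
theorem orderedDecomp_iff_sums_defined {K H : Type*}
    [AddCommGroup K] [PartialOrder K] [IsOrderedAddMonoid K] [AddCommGroup H] [PartialOrder H] [IsOrderedAddMonoid H]
    (v : K) (u : H) (hv : IsStrongUnit v) (hu : IsStrongUnit u)
    (E : H → Set K) (hE : IsDecomp v u E) :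
    (IsOrderedDecomp v u E ↔
      ∀ w ∈ Icc (0 : H) u, ∀ t ∈ Icc (0 : H) u, w + t < u →
        ∀ x ∈ E w, ∀ y ∈ E t, x + y ≤ v) ∧
    (IsOrderedDecomp v u E →
      (∀ s ∈ Icc (0 : H) u, ∀ t ∈ Icc (0 : H) u, s + t < u →
        {z : K | ∃ x ∈ E s, ∃ y ∈ E t, x + y ≤ v ∧ x + y = z} = E (s + t)) ∧
      (∀ s ∈ Icc (0 : H) u, ∀ t ∈ Icc (0 : H) u, u < s + t →
        ∀ x ∈ E s, ∀ y ∈ E t, ¬ x + y ≤ v)) :=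
  orderedDecomp_iff_sums_defined_general v u E hE
end

section
/- Let (H, u) be an Abelian unital po-group with RDP and G a directed Abelian po-group with RDP, and set E = Γ(H ×ₗ G, (u, 0)). Then E has exactly one state if and only if Γ(H, u) has exactly one state. In that case, if s_H is the unique state on Γ(H, u), then the unique state on E is given by s₀(h, g) = s_H(h). -/
open Set

/-!
A state on `Γ(H ×ₗ G, (u, 0))` vanishes at every `(0, g)` with `g ≥ 0`, since all multiples of
`(0, g)` stay below `(u, 0)`. So it takes the same value at `(h, g)` and `(h, c)` whenever
`g ≤ c`, and directedness of `G` gives, for every `(h, g)` in the interval, a common upper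
bound `(h, c)` of `(h, g)` and `(h, 0)` still in the interval. Hence every state on
`Γ(H ×ₗ G, (u, 0))` is the pullback along the first projection of its restriction along
`h ↦ (h, 0)`: pullback and restriction are mutually inverse bijections between the states of
the two effect algebras.
-/

open OrderAddMonoidHom

lemma OrderAddMonoidHom.map_mem_Icc_zero {K L : Type*} [AddCommGroup K] [PartialOrder K]
    [AddCommGroup L] [PartialOrder L] (f : K →+o L) {x v : K} (hx : x ∈ Icc 0 v) :
    f x ∈ Icc 0 (f v) :=
  map_zero f ▸ f.monotone'.mapsTo_Icc hx

namespace IsState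

variable {K : Type*} [AddCommGroup K] [PartialOrder K] {v : K} {s : K → ℝ}

lemma map_zero (hs : IsState v s) (hv : 0 ≤ v) : s 0 = 0 := by
  have h0 : (0 : K) ∈ Icc 0 v := ⟨le_rfl, hv⟩
  simpa using hs.2.2 0 h0 0 h0 (by simpa using hv)

lemma pos (hs : IsState v s) (hv : 0 ≤ v) : 0 < v := by
  refine hv.lt_of_ne fun h => ?_
  have := hs.2.1
  rw [← h, hs.map_zero hv] at this
  exact zero_ne_one this

lemma map_nsmul (hs : IsState v s) {x : K} (hx : ∀ n : ℕ, n • x ∈ Icc 0 v) (n : ℕ) :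
    s (n • x) = n * s x := by
  induction n with
  | zero => simp [hs.map_zero (by simpa using (hx 0).2)]
  | succ n ih =>
    rw [succ_nsmul, hs.2.2 _ (hx n) x (by simpa using hx 1) (succ_nsmul x n ▸ (hx (n + 1)).2), ih]
    push_cast
    ring

lemma apply_eq_zero_of_forall_nsmul_mem (hs : IsState v s) {x : K}
    (hx : ∀ n : ℕ, n • x ∈ Icc 0 v) : s x = 0 := by
  refine le_antisymm (not_lt.1 fun hpos => ?_) (hs.1 x (by simpa using hx 1)).1
  obtain ⟨n, hn⟩ := exists_lt_nsmul hpos 1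
  rw [nsmul_eq_mul, ← hs.map_nsmul hx] at hn
  exact (hs.1 _ (hx n)).2.not_gt hn

variable {L : Type*} [AddCommGroup L] [PartialOrder L]

lemma comp {w : L} {s : L → ℝ} (hs : IsState w s) (f : K →+o L) (hf : f v = w) :
    IsState v (s ∘ f) := by
  have hmem : ∀ x ∈ Icc 0 v, f x ∈ Icc 0 w := fun x hx => hf ▸ f.map_mem_Icc_zero hx
  refine ⟨fun x hx => hs.1 _ (hmem x hx), by simp [hf, hs.2.1], fun x hx y hy hxy => ?_⟩
  simp only [Function.comp_apply, map_add]
  exact hs.2.2 _ (hmem x hx) _ (hmem y hy) (map_add f x y ▸ hf ▸ f.monotone' hxy)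

end IsState

section Lex

variable {H G : Type*} [AddCommGroup H] [PartialOrder H] [AddCommGroup G] [PartialOrder G]
  [IsOrderedAddMonoid G] {u : H}

lemma exists_le_toLex_mem_Icc (hG : IsDirectedGroup G) {h : H} {g : G}
    (hp : toLex (h, g) ∈ Icc (0 : H ×ₗ G) (toLex (u, 0))) :
    ∃ c, g ≤ c ∧ 0 ≤ c ∧ toLex (h, c) ∈ Icc (0 : H ×ₗ G) (toLex (u, 0)) := by
  obtain ⟨h0, hu⟩ := hp
  rw [← toLex_zero, Prod.Lex.toLex_le_toLex] at h0
  rw [Prod.Lex.toLex_le_toLex] at hu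
  simp only [Prod.fst_zero, Prod.snd_zero] at h0 hu
  rcases h0 with h0 | ⟨rfl, hg⟩
  · rcases hu with hu | ⟨rfl, hg⟩
    · obtain ⟨c, hgc, hc⟩ := hG g 0
      exact ⟨c, hgc, hc, Prod.Lex.le_iff.2 (.inl h0), Prod.Lex.le_iff.2 (.inl hu)⟩
    · exact ⟨0, hg, le_rfl, Prod.Lex.le_iff.2 (.inl h0), le_rfl⟩
  · exact ⟨g, le_rfl, hg, Prod.Lex.le_iff.2 (.inr ⟨rfl, hg⟩), Prod.Lex.le_iff.2 hu⟩

lemma nsmul_inrₗ_mem_Icc (hu : 0 < u) {a : G} (ha : 0 ≤ a) (n : ℕ) :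
    n • inrₗ H G a ∈ Icc (0 : H ×ₗ G) (toLex (u, 0)) := by
  rw [← map_nsmul]
  exact ⟨(inrₗ H G).monotone' (nsmul_nonneg ha n), Prod.Lex.le_iff.2 (.inl hu)⟩

variable {s : H ×ₗ G → ℝ}

lemma IsState.apply_toLex_eq_of_le (hs : IsState (toLex (u, 0)) s) {h : H} {g g' : G}
    (hp : toLex (h, g) ∈ Icc (0 : H ×ₗ G) (toLex (u, 0))) (hq : toLex (h, g') ≤ toLex (u, 0))
    (hgg' : g ≤ g') : s (toLex (h, g')) = s (toLex (h, g)) := by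
  have hu : 0 < u := by
    have := hs.pos (hp.1.trans hp.2)
    rw [← toLex_zero, Prod.Lex.toLex_lt_toLex] at this
    simpa using this
  have hd := nsmul_inrₗ_mem_Icc hu (sub_nonneg.2 hgg')
  have e : toLex (h, g') = toLex (h, g) + inrₗ H G (g' - g) := by
    simp [← toLex_add]
  rw [e, hs.2.2 _ hp _ (by simpa using hd 1) (e ▸ hq), hs.apply_eq_zero_of_forall_nsmul_mem hd,
    add_zero]

lemma IsState.apply_eq_apply_inlₗ_fstₗ (hG : IsDirectedGroup G) (hs : IsState (toLex (u, 0)) s)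
    {p : H ×ₗ G} (hp : p ∈ Icc (0 : H ×ₗ G) (toLex (u, 0))) :
    s p = s (inlₗ H G (fstₗ H G p)) := by
  obtain ⟨c, hgc, hc, hq⟩ := exists_le_toLex_mem_Icc (h := (ofLex p).1) (g := (ofLex p).2) hG hp
  have hh : inlₗ H G (fstₗ H G p) ∈ Icc (0 : H ×ₗ G) (toLex (u, 0)) :=
    (inlₗ H G).map_mem_Icc_zero ((fstₗ H G).map_mem_Icc_zero hp)
  calc s p = s (toLex ((ofLex p).1, c)) := (hs.apply_toLex_eq_of_le hp hq.2 hgc).symm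
    _ = s (inlₗ H G (fstₗ H G p)) := hs.apply_toLex_eq_of_le hh hq.2 hc

end Lex

theorem uniqueState_lex_iff_general {H G : Type*} [AddCommGroup H] [PartialOrder H] [AddCommGroup G] [PartialOrder G] [IsOrderedAddMonoid G]
    (u : H) (hG : IsDirectedGroup G) :
    (HasUniqueState (toLex (u, (0 : G))) ↔ HasUniqueState u) ∧
    (∀ sH : H → ℝ, IsState u sH → HasUniqueState u →
      IsState (toLex (u, (0 : G))) (fun p : H ×ₗ G => sH (ofLex p).1) ∧
      ∀ s : H ×ₗ G → ℝ, IsState (toLex (u, (0 : G))) s →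
        ∀ p ∈ Icc (0 : H ×ₗ G) (toLex (u, (0 : G))), s p = sH (ofLex p).1) := by
  have hfst {sH : H → ℝ} (hsH : IsState u sH) :=
    hsH.comp (v := toLex (u, (0 : G))) (fstₗ H G) rfl
  have hinl {s : H ×ₗ G → ℝ} (hs : IsState (toLex (u, (0 : G))) s) :=
    hs.comp (inlₗ H G) rfl
  refine ⟨⟨fun ⟨⟨s, hs⟩, huniq⟩ => ⟨⟨_, hinl hs⟩, fun t t' ht ht' x hx => ?_⟩,
    fun ⟨⟨sH, hsH⟩, huniq⟩ => ⟨⟨_, hfst hsH⟩, fun s s' hs hs' p hp => ?_⟩⟩,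
    fun sH hsH huniq => ⟨hfst hsH, fun s hs p hp => ?_⟩⟩
  · exact huniq _ _ (hfst ht) (hfst ht') _ ((inlₗ H G).map_mem_Icc_zero hx)
  · rw [hs.apply_eq_apply_inlₗ_fstₗ hG hp, hs'.apply_eq_apply_inlₗ_fstₗ hG hp]
    exact huniq _ _ (hinl hs) (hinl hs') _ ((fstₗ H G).map_mem_Icc_zero hp)
  · rw [hs.apply_eq_apply_inlₗ_fstₗ hG hp]
    exact huniq.2 _ _ (hinl hs) hsH _ ((fstₗ H G).map_mem_Icc_zero hp)

/-- `E = Γ(H ×ₗ G, (u, 0))` has a unique state iff `Γ(H, u)` has a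
unique state; in that case, if `s_H` is the unique state on `Γ(H, u)`, the unique
state on `E` is `s₀(h, g) = s_H(h)`. -/
theorem uniqueState_lex_iff {H G : Type*} [AddCommGroup H] [PartialOrder H] [IsOrderedAddMonoid H] [AddCommGroup G] [PartialOrder G] [IsOrderedAddMonoid G]
    (u : H) (hu : IsStrongUnit u) (hH : RDP H) (hG : IsDirectedGroup G) (hRG : RDP G) :
    (HasUniqueState (toLex (u, (0 : G))) ↔ HasUniqueState u) ∧
    (∀ sH : H → ℝ, IsState u sH → HasUniqueState u →
      IsState (toLex (u, (0 : G))) (fun p : H ×ₗ G => sH (ofLex p).1) ∧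
      ∀ s : H ×ₗ G → ℝ, IsState (toLex (u, (0 : G))) s →
        ∀ p ∈ Icc (0 : H ×ₗ G) (toLex (u, (0 : G))), s p = sH (ofLex p).1) :=
  uniqueState_lex_iff_general u hG
end
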